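/- arXiv:0906.3854 — 3 statements merged into one kernel-verified Lean document; each statement's English description precedes it below -/
import Mathlib

section
/- If a_{i,j} are quadratic nonresidues modulo an odd prime p, then g_i(X_{i+1},…,X_m) = ∏_{j=1}^{m−i}(X_{i+j}^2 − a_{i,j}) has no zeros in F_p^{m−i}; consequently the associated triangular system (with any constants h_i = b_i) is a permutation polynomial system of F_p^{m+1}. -/
open MvPolynomial

/-- If the `a_{i,j}` are quadratic nonresidues mod an odd prime `p`, then
`g_i = ∏ (X_t^2 - a_{i,t})` (over `t > i`) has no zeros, and the associated triangular
system is a permutation polynomial system of `F_p^{m+1}`. -/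
theorem stmt4 (p : ℕ) [Fact p.Prime] (hp2 : p ≠ 2) (m : ℕ) (hm : 1 ≤ m)
    (A : Fin (m + 1) → Fin (m + 1) → ZMod p)
    (hA : ∀ i t : Fin (m + 1), i < t → ¬ IsSquare (A i t))
    (B : Fin (m + 1) → ZMod p) (a b : ZMod p) (ha : a ≠ 0)
    (f : Fin (m + 1) → MvPolynomial (Fin (m + 1)) (ZMod p))
    (hf : ∀ i : Fin (m + 1), i.val < m →
      f i = X i * (∏ t ∈ Finset.univ.filter (fun t : Fin (m + 1) => i < t),
        (X t ^ 2 - C (A i t))) + C (B i))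
    (hfm : f ⟨m, Nat.lt_succ_self m⟩ = C a * X ⟨m, Nat.lt_succ_self m⟩ + C b) :
    (∀ i : Fin (m + 1), i.val < m → ∀ x : Fin (m + 1) → ZMod p,
      MvPolynomial.eval x (∏ t ∈ Finset.univ.filter (fun t : Fin (m + 1) => i < t),
        (X t ^ 2 - C (A i t))) ≠ 0) ∧
    Function.Bijective
      (fun x : Fin (m + 1) → ZMod p => fun i => MvPolynomial.eval x (f i)) := by
  have key : ∀ i : Fin (m + 1), i.val < m → ∀ x : Fin (m + 1) → ZMod p,
      MvPolynomial.eval x (∏ t ∈ Finset.univ.filter (fun t : Fin (m + 1) => i < t),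
        (X t ^ 2 - C (A i t))) ≠ 0 := by
    intro i hi x
    rw [map_prod, Finset.prod_ne_zero_iff]
    intro t ht
    simp only [Finset.mem_filter] at ht
    simp only [map_sub, map_pow, eval_X, eval_C]
    intro h
    exact hA i t ht.2 ⟨x t, by rw [← sub_eq_zero.mp h]; ring⟩
  refine ⟨key, Finite.injective_iff_bijective.mp ?_⟩
  intro x y hxy
  have hxy' : ∀ i, MvPolynomial.eval x (f i) = MvPolynomial.eval y (f i) :=
    fun i => congrFun hxy i
  have hlast : x ⟨m, Nat.lt_succ_self m⟩ = y ⟨m, Nat.lt_succ_self m⟩ := by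
    have h := hxy' ⟨m, Nat.lt_succ_self m⟩
    rw [hfm] at h
    simp only [map_add, map_mul, eval_C, eval_X] at h
    exact mul_left_cancel₀ ha (add_right_cancel h)
  suffices h : ∀ k, ∀ i : Fin (m + 1), m - i.val ≤ k → x i = y i by
    funext i; exact h m i (Nat.sub_le _ _)
  intro k
  induction k with
  | zero =>
    intro i hi
    have him : i = ⟨m, Nat.lt_succ_self m⟩ := by
      have := i.isLt; apply Fin.ext; simp; omega
    rw [him]; exact hlast
  | succ k ih =>
    intro i hi
    by_cases hc : i.val = m
    · have him : i = ⟨m, Nat.lt_succ_self m⟩ := Fin.ext hc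
      rw [him]; exact hlast
    · have hic : i.val < m := lt_of_le_of_ne (by omega) hc
      have h := hxy' i
      rw [hf i hic] at h
      simp only [map_add, map_mul, eval_X, eval_C, map_prod, map_sub, map_pow] at h
      have hGeq : (∏ t ∈ Finset.univ.filter (fun t : Fin (m + 1) => i < t),
          (x t ^ 2 - A i t)) = ∏ t ∈ Finset.univ.filter (fun t : Fin (m + 1) => i < t),
          (y t ^ 2 - A i t) := by
        apply Finset.prod_congr rfl
        intro t ht
        simp only [Finset.mem_filter] at ht
        have : x t = y t := ih t (by have := ht.2; rw [Fin.lt_def] at this; omega)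
        rw [this]
      rw [hGeq] at h
      have hG : (∏ t ∈ Finset.univ.filter (fun t : Fin (m + 1) => i < t),
          (y t ^ 2 - A i t)) ≠ 0 := by
        have := key i hic y
        simpa only [map_prod, map_sub, map_pow, eval_X, eval_C] using this
      have := add_right_cancel h
      exact mul_right_cancel₀ hG this
end

section
/- Let F ∈ F_p[X_0,…,X_m] be of the form F = Σ_{i=s}^{m−1} a_i(X_i·G_i(X_{i+1},…,X_m) + H_i(X_{i+1},…,X_m)) with a_s ≠ 0, where G_s is a nonzero polynomial of total degree D. Then |Σ_{x∈F_p^{m+1}} e_p(F(x))| ≤ D·p^m, where e_p(z) = exp(2πiz/p). -/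
open MvPolynomial Finset

lemma schwartz_zippel {K : Type*} [Field K] [Fintype K] [DecidableEq K] :
    ∀ (n : ℕ) (P : MvPolynomial (Fin n) K), P ≠ 0 →
      (univ.filter fun x : Fin n → K => eval x P = 0).card * Fintype.card K
        ≤ P.totalDegree * Fintype.card K ^ n := by
  intro n
  induction n with
  | zero =>
    intro P hP
    obtain ⟨c, rfl⟩ := MvPolynomial.C_surjective (Fin 0) P
    have hc : c ≠ 0 := by simpa using hP
    have : (univ.filter fun x : Fin 0 → K => eval x (C c) = 0) = ∅ := by
      apply Finset.filter_false_of_mem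
      intro x _
      simpa using hc
    rw [this]; simp
  | succ n ih =>
    intro P hP
    set q := MvPolynomial.finSuccEquiv K n P with hq
    have hq0 : q ≠ 0 := by
      rw [hq]
      simpa using (map_ne_zero_iff _ (MvPolynomial.finSuccEquiv K n).injective).mpr hP
    set d := q.natDegree with hd
    set Pd := q.leadingCoeff with hPd
    have hPd0 : Pd ≠ 0 := Polynomial.leadingCoeff_ne_zero.mpr hq0
    have hdeg : Pd.totalDegree + d ≤ P.totalDegree := by
      have := MvPolynomial.totalDegree_coeff_finSuccEquiv_add_le P d (by
        rw [← hq]; exact hPd0)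
      exact this
    have key : (univ.filter fun x : Fin (n+1) → K => eval x P = 0).card
        = ∑ s : Fin n → K, (univ.filter fun y : K =>
            Polynomial.eval y (Polynomial.map (eval s) q) = 0).card := by
      rw [Finset.card_filter, ← Equiv.sum_comp (Fin.consEquiv fun _ : Fin (n+1) => K)
        (fun x : Fin (n+1) → K => if eval x P = 0 then (1:ℕ) else 0), Fintype.sum_prod_type,
        Finset.sum_comm]
      refine Finset.sum_congr rfl fun s _ => ?_
      rw [Finset.card_filter]
      refine Finset.sum_congr rfl fun y _ => ?_
      simp [Fin.consEquiv, MvPolynomial.eval_eq_eval_mv_eval', hq]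
    have hbound : ∀ s : Fin n → K, (univ.filter fun y : K =>
        Polynomial.eval y (Polynomial.map (eval s) q) = 0).card
        ≤ if eval s Pd = 0 then Fintype.card K else d := by
      intro s
      split_ifs with h
      · exact le_trans (Finset.card_filter_le _ _) (by simp)
      · set r := Polynomial.map (eval s) q with hr
        have hr0 : r ≠ 0 := by
          intro h0
          apply h
          have hcd : r.coeff d = 0 := by rw [h0]; simp
          rw [hr, Polynomial.coeff_map] at hcd
          rw [hPd, Polynomial.leadingCoeff, ← hd]
          exact hcd
        have hsub : (univ.filter fun y : K => Polynomial.eval y r = 0) ⊆ r.roots.toFinset := by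
          intro y hy
          simp only [Finset.mem_filter] at hy
          rw [Multiset.mem_toFinset, Polynomial.mem_roots']
          exact ⟨hr0, hy.2⟩
        calc (univ.filter fun y : K => Polynomial.eval y r = 0).card
            ≤ r.roots.toFinset.card := Finset.card_le_card hsub
          _ ≤ Multiset.card r.roots := Multiset.toFinset_card_le _
          _ ≤ r.natDegree := Polynomial.card_roots' r
          _ ≤ d := Polynomial.natDegree_map_le
    set A := (univ.filter fun t : Fin n → K => eval t Pd = 0) with hA
    have hsum : ∑ s : Fin n → K, (if eval s Pd = 0 then Fintype.card K else d)
        ≤ A.card * Fintype.card K + d * Fintype.card K ^ n := by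
      calc ∑ s : Fin n → K, (if eval s Pd = 0 then Fintype.card K else d)
          ≤ ∑ s : Fin n → K, ((if eval s Pd = 0 then Fintype.card K else 0) + d) := by
            refine Finset.sum_le_sum fun s _ => ?_
            split_ifs <;> simp
        _ = A.card * Fintype.card K + d * Fintype.card K ^ n := by
            rw [Finset.sum_add_distrib, ← Finset.sum_filter, Finset.sum_const,
              Finset.sum_const, ← hA]
            simp [mul_comm, Fintype.card_fun]
    have ihA : A.card * Fintype.card K ≤ Pd.totalDegree * Fintype.card K ^ n := ih Pd hPd0
    calc (univ.filter fun x : Fin (n+1) → K => eval x P = 0).card * Fintype.card K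
        = (∑ s : Fin n → K, (univ.filter fun y : K =>
            Polynomial.eval y (Polynomial.map (eval s) q) = 0).card) * Fintype.card K := by
          rw [key]
      _ ≤ (A.card * Fintype.card K + d * Fintype.card K ^ n) * Fintype.card K :=
          Nat.mul_le_mul_right _ (le_trans (Finset.sum_le_sum fun s _ => hbound s) hsum)
      _ = A.card * Fintype.card K * Fintype.card K
            + d * (Fintype.card K ^ n * Fintype.card K) := by ring
      _ ≤ Pd.totalDegree * Fintype.card K ^ n * Fintype.card K
            + d * (Fintype.card K ^ n * Fintype.card K) :=
          Nat.add_le_add_right (Nat.mul_le_mul_right _ ihA) _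
      _ = (Pd.totalDegree + d) * Fintype.card K ^ (n+1) := by ring
      _ ≤ P.totalDegree * Fintype.card K ^ (n+1) := Nat.mul_le_mul_right _ hdeg

lemma eval_eq_of_eqOn {σ R : Type*} [CommSemiring R] {Q : MvPolynomial σ R} {sset : Set σ}
    (hQ : Q ∈ MvPolynomial.supported R sset) {x y : σ → R} (h : ∀ j ∈ sset, x j = y j) :
    eval x Q = eval y Q := by
  have hv := MvPolynomial.mem_supported.mp hQ
  show eval₂Hom (RingHom.id R) x Q = eval₂Hom (RingHom.id R) y Q
  exact MvPolynomial.eval₂Hom_congr' rfl (fun i hi _ => h i (hv hi)) rfl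

/-- The additive character `e_p(z) = exp(2πi z / p)` on `F_p`. -/
noncomputable def ep (p : ℕ) (x : ZMod p) : ℂ :=
  Complex.exp (2 * Real.pi * Complex.I * (x.val : ℂ) / (p : ℂ))

lemma ep_eq_stdAddChar' (p : ℕ) [NeZero p] (x : ZMod p) : ep p x = ZMod.stdAddChar x := by
  rw [ZMod.stdAddChar_apply, ZMod.toCircle_apply, ep]

lemma abs_ep' (p : ℕ) (x : ZMod p) : ‖ep p x‖ = 1 := by
  have h : (2 * Real.pi * Complex.I * (x.val : ℂ) / (p : ℂ))
      = ((2 * Real.pi * x.val / p : ℝ) : ℂ) * Complex.I := by push_cast; ring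
  rw [ep, h, Complex.norm_exp_ofReal_mul_I]

/-- Exponential sum bound for `F = Σ_{i=s}^{m-1} a_i (X_i G_i + H_i)` with `a_s ≠ 0`
and `G_s` nonzero of total degree `D`: the sum over `F_p^{m+1}` is at most `D p^m`. -/
theorem stmt6 (p : ℕ) [Fact p.Prime] (m s : ℕ) (hsm : s < m) (D : ℕ)
    (a : Fin (m + 1) → ZMod p)
    (G H : Fin (m + 1) → MvPolynomial (Fin (m + 1)) (ZMod p))
    (hG : ∀ i : Fin (m + 1), G i ∈ MvPolynomial.supported (ZMod p) {j : Fin (m + 1) | i < j})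
    (hH : ∀ i : Fin (m + 1), H i ∈ MvPolynomial.supported (ZMod p) {j : Fin (m + 1) | i < j})
    (has : a ⟨s, by omega⟩ ≠ 0)
    (hGs0 : G ⟨s, by omega⟩ ≠ 0)
    (hGsD : (G ⟨s, by omega⟩).totalDegree = D)
    (F : MvPolynomial (Fin (m + 1)) (ZMod p))
    (hF : F = ∑ i ∈ Finset.univ.filter
        (fun i : Fin (m + 1) => s ≤ i.val ∧ i.val < m),
      C (a i) * (X i * G i + H i)) :
    ‖∑ x : Fin (m + 1) → ZMod p, ep p (MvPolynomial.eval x F)‖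
      ≤ (D : ℝ) * (p : ℝ) ^ m := by
  classical
  haveI : NeZero p := ⟨(Fact.out : p.Prime).ne_zero⟩
  set i0 : Fin (m + 1) := ⟨s, by omega⟩ with hi0
  set Φ := Finset.univ.filter (fun i : Fin (m + 1) => s ≤ i.val ∧ i.val < m) with hΦ
  have hsmem : i0 ∈ Φ := by
    simp only [hΦ, Finset.mem_filter, Finset.mem_univ, true_and, hi0]
    exact ⟨le_refl s, hsm⟩
  set R := C (a i0) * H i0 + ∑ i ∈ Φ.erase i0, C (a i) * (X i * G i + H i) with hRdef
  have hFR : F = C (a i0) * (X i0 * G i0) + R := by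
    rw [hF, ← Finset.add_sum_erase _ _ hsmem, hRdef]; ring
  -- support facts
  have hCmem : ∀ (c : ZMod p) (sset : Set (Fin (m+1))),
      C c ∈ MvPolynomial.supported (ZMod p) sset := by
    intro c sset
    have := Subalgebra.algebraMap_mem (MvPolynomial.supported (ZMod p) sset) c
    rwa [MvPolynomial.algebraMap_eq] at this
  have hsub : ∀ i : Fin (m+1), s ≤ i.val →
      {j : Fin (m+1) | i < j} ⊆ {j : Fin (m+1) | j ≠ i0} := by
    intro i hi j hj e
    rw [Set.mem_setOf_eq, Fin.lt_def] at hj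
    rw [e] at hj
    simp only [hi0] at hj
    omega
  have hGsupp : G i0 ∈ MvPolynomial.supported (ZMod p) {j | j ≠ i0} :=
    MvPolynomial.supported_mono (hsub i0 (le_refl s)) (hG i0)
  have hRsupp : R ∈ MvPolynomial.supported (ZMod p) {j | j ≠ i0} := by
    rw [hRdef]
    refine Subalgebra.add_mem _
      (Subalgebra.mul_mem _ (hCmem _ _)
        (MvPolynomial.supported_mono (hsub i0 (le_refl s)) (hH i0)))
      (Subalgebra.sum_mem _ fun i hi => ?_)
    have hi1 : i ∈ Φ := Finset.mem_of_mem_erase hi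
    have hine : i ≠ i0 := Finset.ne_of_mem_erase hi
    have hsle : s ≤ i.val := ((Finset.mem_filter.mp hi1).2).1
    refine Subalgebra.mul_mem _ (hCmem _ _) (Subalgebra.add_mem _
      (Subalgebra.mul_mem _ ?_ (MvPolynomial.supported_mono (hsub i hsle) (hG i)))
      (MvPolynomial.supported_mono (hsub i hsle) (hH i)))
    rw [MvPolynomial.X_mem_supported]
    exact hine
  -- the split equivalence
  set e := Equiv.funSplitAt i0 (ZMod p) with he
  set xy : ({j : Fin (m+1) // j ≠ i0} → ZMod p) → (Fin (m+1) → ZMod p) :=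
    fun y => e.symm (0, y) with hxy
  have hagree : ∀ (t : ZMod p) (y : {j : Fin (m+1) // j ≠ i0} → ZMod p),
      ∀ j, j ≠ i0 → e.symm (t, y) j = xy y j := by
    intro t y j hj
    simp [hxy, he, Equiv.funSplitAt, Equiv.piSplitAt, dif_neg hj]
  have hat : ∀ (t : ZMod p) (y : {j : Fin (m+1) // j ≠ i0} → ZMod p),
      e.symm (t, y) i0 = t := by
    intro t y
    simp [he, Equiv.funSplitAt, Equiv.piSplitAt]
  set c : ({j : Fin (m+1) // j ≠ i0} → ZMod p) → ZMod p :=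
    fun y => eval (xy y) (G i0) with hc
  set r : ({j : Fin (m+1) // j ≠ i0} → ZMod p) → ZMod p :=
    fun y => eval (xy y) R with hr
  have hevF : ∀ (t : ZMod p) (y : {j : Fin (m+1) // j ≠ i0} → ZMod p),
      eval (e.symm (t, y)) F = a i0 * (t * c y) + r y := by
    intro t y
    rw [hFR]
    simp only [map_add, map_mul, eval_C, eval_X]
    rw [eval_eq_of_eqOn hGsupp (fun j hj => hagree t y j hj),
      eval_eq_of_eqOn hRsupp (fun j hj => hagree t y j hj), hat]
  -- rewrite the sum
  have hsum : (∑ x : Fin (m + 1) → ZMod p, ep p (eval x F))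
      = ∑ y : {j : Fin (m+1) // j ≠ i0} → ZMod p,
          (if c y = 0 then (p : ℂ) else 0) * ep p (r y) := by
    rw [← Equiv.sum_comp e.symm (fun x => ep p (eval x F)), Fintype.sum_prod_type,
      Finset.sum_comm]
    refine Finset.sum_congr rfl fun y _ => ?_
    have : ∀ t : ZMod p, ep p (eval (e.symm (t, y)) F)
        = ZMod.stdAddChar (t * (a i0 * c y)) * ep p (r y) := by
      intro t
      rw [hevF, ep_eq_stdAddChar', ep_eq_stdAddChar']
      rw [show a i0 * (t * c y) + r y = (t * (a i0 * c y)) + r y by ring]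
      exact AddChar.map_add_eq_mul _ _ _
    simp_rw [this]
    rw [← Finset.sum_mul, AddChar.sum_mulShift _ (ZMod.isPrimitive_stdAddChar p)]
    have hcond : (a i0 * c y = 0) ↔ (c y = 0) := by
      constructor
      · intro h
        rcases mul_eq_zero.mp h with h' | h'
        · exact absurd h' has
        · exact h'
      · intro h; rw [h, mul_zero]
    by_cases hcy : c y = 0
    · rw [if_pos (hcond.mpr hcy), if_pos hcy, ZMod.card]
    · rw [if_neg (fun h => hcy (hcond.mp h)), if_neg hcy]
      norm_num
  -- counting
  set Ny := (univ.filter fun y : {j : Fin (m+1) // j ≠ i0} → ZMod p => c y = 0).card with hNy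
  set Nx := (univ.filter fun x : Fin (m+1) → ZMod p => eval x (G i0) = 0).card with hNx
  have hNxy : Nx = p * Ny := by
    have h1 : Nx = ((univ : Finset (ZMod p × ({j : Fin (m+1) // j ≠ i0} → ZMod p))).filter
        fun z => c z.2 = 0).card := by
      rw [hNx]
      apply Finset.card_equiv e
      intro x
      simp only [Finset.mem_filter, Finset.mem_univ, true_and]
      have hx : eval x (G i0) = c (e x).2 := by
        refine eval_eq_of_eqOn hGsupp fun j hj => ?_
        simp [hxy, he, Equiv.funSplitAt, Equiv.piSplitAt, dif_neg hj]
      rw [hx]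
    have h2 : ((univ : Finset (ZMod p × ({j : Fin (m+1) // j ≠ i0} → ZMod p))).filter
        fun z => c z.2 = 0)
        = (univ : Finset (ZMod p)) ×ˢ (univ.filter fun y => c y = 0) := by
      ext z
      simp [Finset.mem_product]
    rw [h1, h2, Finset.card_product, Finset.card_univ, ZMod.card]
  have hSZ : Nx * p ≤ D * p ^ (m + 1) := by
    have := schwartz_zippel (m + 1) (G i0) hGs0
    rwa [ZMod.card, hGsD, ← hNx] at this
  have hNyp : Ny * p ≤ D * p ^ m := by
    have hp : 0 < p := (Fact.out : p.Prime).pos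
    have : p * (Ny * p) ≤ p * (D * p ^ m) := by
      calc p * (Ny * p) = Nx * p := by rw [hNxy]; ring
        _ ≤ D * p ^ (m + 1) := hSZ
        _ = p * (D * p ^ m) := by ring
    exact Nat.le_of_mul_le_mul_left this hp
  -- final estimate
  rw [hsum]
  calc ‖∑ y : {j : Fin (m+1) // j ≠ i0} → ZMod p,
        (if c y = 0 then (p : ℂ) else 0) * ep p (r y)‖
      ≤ ∑ y : {j : Fin (m+1) // j ≠ i0} → ZMod p,
        ‖(if c y = 0 then (p : ℂ) else 0) * ep p (r y)‖ :=
        norm_sum_le _ _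
    _ = ∑ y : {j : Fin (m+1) // j ≠ i0} → ZMod p,
        (if c y = 0 then (p : ℝ) else 0) := by
        refine Finset.sum_congr rfl fun y _ => ?_
        rw [norm_mul, abs_ep', mul_one]
        split_ifs
        · simp
        · simp
    _ = (Ny : ℝ) * p := by
        rw [← Finset.sum_filter, Finset.sum_const, hNy]
        simp [mul_comm]
    _ ≤ (D : ℝ) * (p : ℝ) ^ m := by
        have := hNyp
        calc (Ny : ℝ) * p = ((Ny * p : ℕ) : ℝ) := by push_cast; ring
          _ ≤ ((D * p ^ m : ℕ) : ℝ) := by exact_mod_cast hNyp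
          _ = (D : ℝ) * (p : ℝ) ^ m := by push_cast; ring
end

section
/- For the triangular system with m = 1, f_0 = X_0(X_1^2 − a) + b_0, f_1 = cX_1 + d over F_p with c ≠ 0, a a quadratic nonresidue: writing f_0^{(k)} = X_0·g_{0,k}(X_1) + h_{0,k}(X_1), the polynomial g_{0,k}(X_1) = ∏_{j=0}^{k−1} ((c^j X_1 + d(c^j−1)/(c−1))^2 − a) when c ≠ 1 (and ∏_{j=0}^{k−1}((X_1+jd)^2 − a) when c = 1), and in particular g_{0,k} has no roots in F_p, so each iterate map remains a bijection of F_p^2. -/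
open MvPolynomial

private lemma eval_supported_congr {p : ℕ} {s : Set (Fin 2)}
    {h : MvPolynomial (Fin 2) (ZMod p)} (hm : h ∈ MvPolynomial.supported (ZMod p) s)
    {x y : Fin 2 → ZMod p} (hxy : ∀ i ∈ s, x i = y i) :
    MvPolynomial.eval x h = MvPolynomial.eval y h := by
  rw [MvPolynomial.mem_supported] at hm
  exact MvPolynomial.eval₂Hom_congr' rfl
    (fun i hi _ => hxy i (hm hi)) rfl

/-- For `f₀ = X₀(X₁² - a) + b₀`, `f₁ = cX₁ + d` over `F_p` with `a` a nonresidue, the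
iterates satisfy `f₀^{(k)} = X₀ g_{0,k}(X₁) + h_{0,k}(X₁)` with the explicit product
formula for `g_{0,k}`, which has no roots in `F_p`; hence each iterate map is a
bijection of `F_p²`. -/
theorem stmt14 (p : ℕ) [Fact p.Prime] (hp2 : p ≠ 2) (a b0 c d : ZMod p)
    (ha : ¬ IsSquare a) (hc : c ≠ 0)
    (f0 f1 : MvPolynomial (Fin 2) (ZMod p))
    (hf0 : f0 = X 0 * (X 1 ^ 2 - C a) + C b0)
    (hf1 : f1 = C c * X 1 + C d)
    (fIter : ℕ → Fin 2 → MvPolynomial (Fin 2) (ZMod p))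
    (hIter0 : ∀ i, fIter 0 i = X i)
    (hIterS : ∀ k i, fIter (k + 1) i =
      MvPolynomial.bind₁ (fIter k) (if i = 0 then f0 else f1)) :
    ∀ k : ℕ,
      (∃ h : MvPolynomial (Fin 2) (ZMod p),
          h ∈ MvPolynomial.supported (ZMod p) ({1} : Set (Fin 2)) ∧
          fIter k 0 = X 0 *
            (if c ≠ 1 then
              ∏ j ∈ Finset.range k,
                ((C (c ^ j) * X 1 + C (d * (c ^ j - 1) / (c - 1))) ^ 2 - C a)
            else
              ∏ j ∈ Finset.range k, ((X 1 + C ((j : ZMod p) * d)) ^ 2 - C a)) + h) ∧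
      (∀ x : Fin 2 → ZMod p,
        MvPolynomial.eval x
          (if c ≠ 1 then
            ∏ j ∈ Finset.range k,
              ((C (c ^ j) * X 1 + C (d * (c ^ j - 1) / (c - 1))) ^ 2 - C a)
          else
            ∏ j ∈ Finset.range k, ((X 1 + C ((j : ZMod p) * d)) ^ 2 - C a)) ≠ 0) ∧
      Function.Bijective
        (fun x : Fin 2 → ZMod p => fun i => MvPolynomial.eval x (fIter k i)) := by
  -- the affine coefficients of the first iterate
  set dk : ℕ → ZMod p := fun k =>
    if c ≠ 1 then d * (c ^ k - 1) / (c - 1) else (k : ZMod p) * d with hdk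
  set G : ℕ → MvPolynomial (Fin 2) (ZMod p) := fun k =>
    ∏ j ∈ Finset.range k, ((C (c ^ j) * X 1 + C (dk j)) ^ 2 - C a) with hG
  -- G equals the if-expression from the statement
  have hGeq : ∀ k : ℕ, G k =
      (if c ≠ 1 then
        ∏ j ∈ Finset.range k,
          ((C (c ^ j) * X 1 + C (d * (c ^ j - 1) / (c - 1))) ^ 2 - C a)
      else
        ∏ j ∈ Finset.range k, ((X 1 + C ((j : ZMod p) * d)) ^ 2 - C a)) := by
    intro k
    by_cases h1 : c = 1
    · simp [hG, hdk, h1]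
    · simp [hG, hdk, h1]
  -- recursion for dk
  have hdkS : ∀ k : ℕ, c * dk k + d = dk (k + 1) := by
    intro k
    by_cases h1 : c = 1
    · simp [hdk, h1]; push_cast; ring
    · have hne : c - 1 ≠ 0 := sub_ne_zero.mpr h1
      simp only [hdk, if_pos h1, ne_eq]
      field_simp
      ring
  -- the linear iterate
  have hA : ∀ k : ℕ, fIter k 1 = C (c ^ k) * X 1 + C (dk k) := by
    intro k
    induction k with
    | zero =>
      have hdk0 : dk 0 = 0 := by by_cases h1 : c = 1 <;> simp [hdk, h1]
      simp [hIter0, hdk0]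
    | succ k ih =>
      rw [hIterS k 1, if_neg (show (1 : Fin 2) ≠ 0 by decide), hf1]
      simp only [map_add, map_mul, bind₁_C_right, bind₁_X_right, ih]
      rw [← hdkS k, pow_succ, map_mul, map_add, map_mul]
      ring
  -- the representation of the 0-th iterate
  have hB : ∀ k : ℕ, ∃ h : MvPolynomial (Fin 2) (ZMod p),
      h ∈ MvPolynomial.supported (ZMod p) ({1} : Set (Fin 2)) ∧
      fIter k 0 = X 0 * G k + h := by
    intro k
    induction k with
    | zero =>
      refine ⟨0, Subalgebra.zero_mem _, ?_⟩
      simp [hIter0, hG]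
    | succ k ih =>
      obtain ⟨h, hm, hrep⟩ := ih
      refine ⟨h * ((C (c ^ k) * X 1 + C (dk k)) ^ 2 - C a) + C b0, ?_, ?_⟩
      · have hX1 : (X 1 : MvPolynomial (Fin 2) (ZMod p)) ∈
            MvPolynomial.supported (ZMod p) ({1} : Set (Fin 2)) :=
          MvPolynomial.X_mem_supported.mpr rfl
        exact Subalgebra.add_mem _
          (Subalgebra.mul_mem _ hm
            (Subalgebra.sub_mem _
              (Subalgebra.pow_mem _
                (Subalgebra.add_mem _
                  (Subalgebra.mul_mem _ (Subalgebra.algebraMap_mem _ _) hX1)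
                  (Subalgebra.algebraMap_mem _ _)) 2)
              (Subalgebra.algebraMap_mem _ _)))
          (Subalgebra.algebraMap_mem _ _)
      · rw [hIterS k 0, if_pos rfl, hf0]
        simp only [map_add, map_mul, map_sub, map_pow, bind₁_C_right, bind₁_X_right]
        rw [hrep, hA k]
        simp only [hG, Finset.prod_range_succ, map_pow]
        ring
  -- nonvanishing of factors
  have hfac : ∀ t : ZMod p, t ^ 2 - a ≠ 0 := by
    intro t h
    refine ha ⟨t, ?_⟩
    rw [← sub_eq_zero.mp h]
    ring
  have hNZ : ∀ (k : ℕ) (x : Fin 2 → ZMod p), MvPolynomial.eval x (G k) ≠ 0 := by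
    intro k x
    rw [hG]
    simp only [map_prod, map_sub, map_pow, map_add, map_mul, eval_C, eval_X]
    exact Finset.prod_ne_zero_iff.mpr fun j _ => hfac _
  intro k
  refine ⟨?_, ?_, ?_⟩
  · obtain ⟨h, hm, hrep⟩ := hB k
    exact ⟨h, hm, by rw [hrep, hGeq k]⟩
  · intro x
    rw [← hGeq k]
    exact hNZ k x
  · rw [Finite.injective_iff_bijective.symm]
    intro x y hxy
    obtain ⟨h, hm, hrep⟩ := hB k
    have h1 : x 1 = y 1 := by
      have e := congrFun hxy 1
      simp only [hA k, map_add, map_mul, eval_C, eval_X] at e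
      exact mul_left_cancel₀ (pow_ne_zero k hc) (add_right_cancel e)
    have hGx : MvPolynomial.eval x (G k) = MvPolynomial.eval y (G k) := by
      rw [hG]
      simp [h1]
    have hhx : MvPolynomial.eval x h = MvPolynomial.eval y h :=
      eval_supported_congr hm (by rintro i rfl; exact h1)
    have h0 : x 0 = y 0 := by
      have := congrFun hxy 0
      simp only [hrep, map_add, map_mul, eval_X] at this
      rw [hGx, hhx] at this
      have := add_right_cancel this
      exact mul_right_cancel₀ (hGx ▸ hNZ k y) this
    funext i
    fin_cases i
    · exact h0
    · exact h1
end
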